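/- Under the stepped-wedge randomization with I ≥ 3, for pairwise distinct clusters i, i′, k in {1,…,I} and periods a ≤ b ≤ c in {1,…,J}, the order-3 mixed joint probabilities with exactly one control indicator are: (i) P(Z_{ia}=1, Z_{i′b}=1, Z_{kc}=0) = (I_a/I)·((I_b − 1)/(I − 1))·((I − I_c)/(I − 2)); (ii) P(Z_{ia}=1, Z_{i′b}=0, Z_{kc}=1) = (I_a/I)·[((I_b − 1)/(I − 1))·((I − I_b)/(I − 2)) + ((I_c − I_b)/(I − 1))·((I − I_b − 1)/(I − 2))]; (iii) P(Z_{ia}=0, Z_{i′b}=1, Z_{kc}=1) = ((I_b − I_a)/I)·((I_b − 1)/(I − 1))·((I_c − 2)/(I − 2)) + ((I_c − I_b)/I)·(I_b/(I − 1))·((I_c − 2)/(I − 2)) + ((I − I_c)/I)·(I_b/(I − 1))·((I_c − 1)/(I − 2)). -/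

import Mathlib

open Finset
open scoped Classical

noncomputable section

/-- Probability of an event under the uniform random permutation of `Fin I`
(each of the `I!` permutations has probability `1/I!`). -/
def swProb (I : ℕ) (p : Equiv.Perm (Fin I) → Prop) : ℝ :=
  ((Finset.univ.filter p).card : ℝ) / (Nat.factorial I : ℝ)

/-- Expectation of a real statistic under the uniform random permutation of `Fin I`. -/
def swExp (I : ℕ) (f : Equiv.Perm (Fin I) → ℝ) : ℝ :=
  (∑ σ : Equiv.Perm (Fin I), f σ) / (Nat.factorial I : ℝ)

/-- Variance with respect to the uniform random permutation. -/
def swVar (I : ℕ) (f : Equiv.Perm (Fin I) → ℝ) : ℝ :=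
  swExp I (fun σ => (f σ - swExp I f) ^ 2)

/-- Covariance with respect to the uniform random permutation. -/
def swCov (I : ℕ) (f g : Equiv.Perm (Fin I) → ℝ) : ℝ :=
  swExp I (fun σ => (f σ - swExp I f) * (g σ - swExp I g))

/-- Treatment indicator: cluster `i` is treated in period `j` iff its position
`σ(i) + 1` (in `{1,…,I}`) is at most the treated count `T j`. -/
def swZ (I : ℕ) (T : ℕ → ℕ) (σ : Equiv.Perm (Fin I)) (i : Fin I) (j : ℕ) : ℕ :=
  if (σ i : ℕ) < T j then 1 else 0

/-- Cluster-level propensity score `e_j = I_j / I`. -/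
def swE (I : ℕ) (T : ℕ → ℕ) (j : ℕ) : ℝ := (T j : ℝ) / (I : ℝ)

/-- Joint probability that both cluster-periods are treated. -/
def swE11 (I : ℕ) (T : ℕ → ℕ) (p q : Fin I × ℕ) : ℝ :=
  swProb I (fun σ => swZ I T σ p.1 p.2 = 1 ∧ swZ I T σ q.1 q.2 = 1)

/-- Joint probability that both cluster-periods are untreated. -/
def swE00 (I : ℕ) (T : ℕ → ℕ) (p q : Fin I × ℕ) : ℝ :=
  swProb I (fun σ => swZ I T σ p.1 p.2 = 0 ∧ swZ I T σ q.1 q.2 = 0)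

/-- Joint probability that the first cluster-period is treated and the second untreated. -/
def swE10 (I : ℕ) (T : ℕ → ℕ) (p q : Fin I × ℕ) : ℝ :=
  swProb I (fun σ => swZ I T σ p.1 p.2 = 1 ∧ swZ I T σ q.1 q.2 = 0)

/-- Treated-arm Horvitz–Thompson estimator. -/
def tauHat1 (I J : ℕ) (T : ℕ → ℕ) (N : ℝ) (r1 : Fin I → ℕ → ℝ)
    (σ : Equiv.Perm (Fin I)) : ℝ :=
  (1 / N) * ∑ i : Fin I, ∑ j ∈ Finset.Icc 1 J, (swZ I T σ i j : ℝ) * r1 i j / swE I T j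

/-- Control-arm Horvitz–Thompson estimator. -/
def tauHat0 (I J : ℕ) (T : ℕ → ℕ) (N : ℝ) (r0 : Fin I → ℕ → ℝ)
    (σ : Equiv.Perm (Fin I)) : ℝ :=
  (1 / N) * ∑ i : Fin I, ∑ j ∈ Finset.Icc 1 J,
    (1 - (swZ I T σ i j : ℝ)) * r0 i j / (1 - swE I T j)

/-- Horvitz–Thompson estimator of the residualized average treatment effect. -/
def tauHatD (I J : ℕ) (T : ℕ → ℕ) (N : ℝ) (r1 r0 : Fin I → ℕ → ℝ)
    (σ : Equiv.Perm (Fin I)) : ℝ :=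
  (1 / N) * ∑ i : Fin I, ∑ j ∈ Finset.Icc 1 J,
    ((swZ I T σ i j : ℝ) * r1 i j / swE I T j
      - (1 - (swZ I T σ i j : ℝ)) * r0 i j / (1 - swE I T j))

/-- Treated-arm variance estimator. -/
def varHat1 (I J : ℕ) (T : ℕ → ℕ) (N : ℝ) (r1 : Fin I → ℕ → ℝ)
    (σ : Equiv.Perm (Fin I)) : ℝ :=
  (1 / N ^ 2) *
    ((∑ p ∈ Finset.univ ×ˢ Finset.Icc 1 J,
        (swZ I T σ p.1 p.2 : ℝ) * ((1 - swE I T p.2) / (swE I T p.2) ^ 2) * (r1 p.1 p.2) ^ 2)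
      + (∑ p ∈ Finset.univ ×ˢ Finset.Icc 1 J, ∑ q ∈ Finset.univ ×ˢ Finset.Icc 1 J,
          if p ≠ q ∧ 0 < swE11 I T p q then
            (swZ I T σ p.1 p.2 : ℝ) * (swZ I T σ q.1 q.2 : ℝ) *
              ((swE11 I T p q - swE I T p.2 * swE I T q.2) /
                (swE11 I T p q * swE I T p.2 * swE I T q.2)) *
              r1 p.1 p.2 * r1 q.1 q.2
          else 0)
      + (∑ p ∈ Finset.univ ×ˢ Finset.Icc 1 J, ∑ q ∈ Finset.univ ×ˢ Finset.Icc 1 J,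
          if p ≠ q ∧ swE11 I T p q = 0 then
            (swZ I T σ p.1 p.2 : ℝ) * (r1 p.1 p.2) ^ 2 / (2 * swE I T p.2)
              + (swZ I T σ q.1 q.2 : ℝ) * (r1 q.1 q.2) ^ 2 / (2 * swE I T q.2)
          else 0))

/-- Control-arm variance estimator. -/
def varHat0 (I J : ℕ) (T : ℕ → ℕ) (N : ℝ) (r0 : Fin I → ℕ → ℝ)
    (σ : Equiv.Perm (Fin I)) : ℝ :=
  (1 / N ^ 2) *
    ((∑ p ∈ Finset.univ ×ˢ Finset.Icc 1 J,
        (1 - (swZ I T σ p.1 p.2 : ℝ)) * (swE I T p.2 / (1 - swE I T p.2) ^ 2) * (r0 p.1 p.2) ^ 2)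
      + (∑ p ∈ Finset.univ ×ˢ Finset.Icc 1 J, ∑ q ∈ Finset.univ ×ˢ Finset.Icc 1 J,
          if p ≠ q ∧ 0 < swE00 I T p q then
            (1 - (swZ I T σ p.1 p.2 : ℝ)) * (1 - (swZ I T σ q.1 q.2 : ℝ)) *
              ((swE00 I T p q - (1 - swE I T p.2) * (1 - swE I T q.2)) /
                (swE00 I T p q * (1 - swE I T p.2) * (1 - swE I T q.2))) *
              r0 p.1 p.2 * r0 q.1 q.2
          else 0)
      + (∑ p ∈ Finset.univ ×ˢ Finset.Icc 1 J, ∑ q ∈ Finset.univ ×ˢ Finset.Icc 1 J,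
          if p ≠ q ∧ swE00 I T p q = 0 then
            (1 - (swZ I T σ p.1 p.2 : ℝ)) * (r0 p.1 p.2) ^ 2 / (2 * (1 - swE I T p.2))
              + (1 - (swZ I T σ q.1 q.2 : ℝ)) * (r0 q.1 q.2) ^ 2 / (2 * (1 - swE I T q.2))
          else 0))

/-- Covariance estimator. -/
def covHat (I J : ℕ) (T : ℕ → ℕ) (N : ℝ) (r1 r0 : Fin I → ℕ → ℝ)
    (σ : Equiv.Perm (Fin I)) : ℝ :=
  -(1 / N ^ 2) *
      (∑ p ∈ Finset.univ ×ˢ Finset.Icc 1 J, ∑ q ∈ Finset.univ ×ˢ Finset.Icc 1 J,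
        if swE10 I T p q = 0 then
          (swZ I T σ p.1 p.2 : ℝ) * (r1 p.1 p.2) ^ 2 / (2 * swE I T p.2)
            + (1 - (swZ I T σ q.1 q.2 : ℝ)) * (r0 q.1 q.2) ^ 2 / (2 * (1 - swE I T q.2))
        else 0)
    + (1 / N ^ 2) *
      (∑ p ∈ Finset.univ ×ˢ Finset.Icc 1 J, ∑ q ∈ Finset.univ ×ˢ Finset.Icc 1 J,
        if p ≠ q ∧ 0 < swE10 I T p q then
          (swZ I T σ p.1 p.2 : ℝ) * (1 - (swZ I T σ q.1 q.2 : ℝ)) *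
            ((swE10 I T p q - swE I T p.2 * (1 - swE I T q.2)) /
              (swE10 I T p q * swE I T p.2 * (1 - swE I T q.2))) *
            r1 p.1 p.2 * r0 q.1 q.2
        else 0)

/-- The adoption period of a cluster placed `l`-th in line:
`P_l = min { j ∈ {1,…,J} : l ≤ I_j }` if `l ≤ I_J`, and `J + 1` otherwise. -/
def swP (J : ℕ) (T : ℕ → ℕ) (l : ℕ) : ℕ :=
  if l ≤ T J then sInf {j | 1 ≤ j ∧ j ≤ J ∧ l ≤ T j} else J + 1

/-- The combinatorial matrix entry `c(i, l)`. -/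
def swC (I J : ℕ) (T : ℕ → ℕ) (N : ℝ) (r1 r0 : Fin I → ℕ → ℝ)
    (i : Fin I) (l : ℕ) : ℝ :=
  (1 / N) * ((∑ j ∈ Finset.Icc (swP J T l) J, r1 i j / swE I T j)
    - ∑ j ∈ Finset.Icc 1 (swP J T l - 1), r0 i j / (1 - swE I T j))


section Aux
variable {α : Type*} [DecidableEq α] [Fintype α]

lemma fiber_card_eq (i i' k : α) (σ₀ σ₁ : Equiv.Perm α) :
    (univ.filter fun σ : Equiv.Perm α => σ i = σ₀ i ∧ σ i' = σ₀ i' ∧ σ k = σ₀ k).card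
    = (univ.filter fun σ : Equiv.Perm α => σ i = σ₁ i ∧ σ i' = σ₁ i' ∧ σ k = σ₁ k).card := by
  apply Finset.card_bij' (fun σ _ => σ₁ * σ₀⁻¹ * σ) (fun σ _ => σ₀ * σ₁⁻¹ * σ)
  · intro σ hσ
    simp only [mem_filter, mem_univ, true_and] at hσ ⊢
    refine ⟨?_, ?_, ?_⟩ <;>
      simp [Equiv.Perm.mul_apply, hσ.1, hσ.2.1, hσ.2.2]
  · intro σ hσ
    simp only [mem_filter, mem_univ, true_and] at hσ ⊢
    refine ⟨?_, ?_, ?_⟩ <;>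
      simp [Equiv.Perm.mul_apply, hσ.1, hσ.2.1, hσ.2.2]
  · intro σ hσ; group
  · intro σ hσ; group

lemma perm_group_count (i i' k : α)
    (hii' : i ≠ i') (hik : i ≠ k) (hi'k : i' ≠ k)
    (P : α × α × α → Prop) :
    (univ.filter fun σ : Equiv.Perm α => P (σ i, σ i', σ k)).card
      = (univ.filter fun t : α × α × α => P t ∧ t.1 ≠ t.2.1 ∧ t.1 ≠ t.2.2 ∧ t.2.1 ≠ t.2.2).card
        * (univ.filter fun σ : Equiv.Perm α => σ i = i ∧ σ i' = i' ∧ σ k = k).card := by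
  have hexists : ∀ (x y z : α), x ≠ y → x ≠ z → y ≠ z →
      ∃ σ : Equiv.Perm α, σ i = x ∧ σ i' = y ∧ σ k = z := by
    intro x y z hxy hxz hyz
    set σ₁ : Equiv.Perm α := Equiv.swap i x with hσ₁
    set σ₂ : Equiv.Perm α := Equiv.swap (σ₁ i') y with hσ₂
    set σ₃ : Equiv.Perm α := Equiv.swap (σ₂ (σ₁ k)) z with hσ₃
    have h1 : σ₁ i = x := Equiv.swap_apply_left i x
    have h2 : σ₂ (σ₁ i') = y := Equiv.swap_apply_left _ y
    have h3 : σ₃ (σ₂ (σ₁ k)) = z := Equiv.swap_apply_left _ z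
    have hx1 : σ₂ x = x := by
      apply Equiv.swap_apply_of_ne_of_ne
      · intro h; exact hii' (σ₁.injective (h1.trans h))
      · exact hxy
    have hx2 : σ₃ x = x := by
      apply Equiv.swap_apply_of_ne_of_ne
      · intro h
        have : σ₂ (σ₁ i) = σ₂ (σ₁ k) := by rw [h1, hx1]; exact h
        exact hik (σ₁.injective (σ₂.injective this))
      · exact hxz
    have hy3 : σ₃ y = y := by
      apply Equiv.swap_apply_of_ne_of_ne
      · intro h
        have : σ₂ (σ₁ i') = σ₂ (σ₁ k) := h2.trans h
        exact hi'k (σ₁.injective (σ₂.injective this))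
      · exact hyz
    refine ⟨σ₃ * σ₂ * σ₁, ?_, ?_, ?_⟩
    · simp [Equiv.Perm.mul_apply, h1, hx1, hx2]
    · simp [Equiv.Perm.mul_apply, h2, hy3]
    · simp [Equiv.Perm.mul_apply, h3]
  rw [Finset.card_eq_sum_card_fiberwise
    (f := fun σ : Equiv.Perm α => (σ i, σ i', σ k))
    (t := univ.filter fun t : α × α × α => P t ∧ t.1 ≠ t.2.1 ∧ t.1 ≠ t.2.2 ∧ t.2.1 ≠ t.2.2)
    (by
      intro σ hσ
      simp only [Finset.mem_coe, mem_filter, mem_univ, true_and] at hσ ⊢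
      refine ⟨hσ, ?_, ?_, ?_⟩ <;> simp [σ.injective.ne_iff, hii', hik, hi'k])]
  rw [Finset.sum_congr rfl (fun t ht => ?_), Finset.sum_const, smul_eq_mul]
  simp only [mem_filter, mem_univ, true_and] at ht
  obtain ⟨hP, h12, h13, h23⟩ := ht
  obtain ⟨σₜ, hσ1, hσ2, hσ3⟩ := hexists t.1 t.2.1 t.2.2 h12 h13 h23
  have : (univ.filter fun σ : Equiv.Perm α => P (σ i, σ i', σ k)).filter
        (fun σ => (σ i, σ i', σ k) = t)
      = univ.filter fun σ : Equiv.Perm α => σ i = σₜ i ∧ σ i' = σₜ i' ∧ σ k = σₜ k := by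
    rw [Finset.filter_filter]
    apply Finset.filter_congr
    intro σ _
    rw [hσ1, hσ2, hσ3]
    constructor
    · rintro ⟨-, h⟩
      exact ⟨congrArg Prod.fst h, congrArg (Prod.fst ∘ Prod.snd) h,
        congrArg (Prod.snd ∘ Prod.snd) h⟩
    · rintro ⟨e1, e2, e3⟩
      have ht : (σ i, σ i', σ k) = t := by
        rw [e1, e2, e3]
      rw [ht]
      exact ⟨hP, rfl⟩
  rw [this]
  exact fiber_card_eq i i' k σₜ 1

lemma count_triples (pa pb pc : α → Prop)
    [DecidablePred pa] [DecidablePred pb] [DecidablePred pc] :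
    ((univ.filter fun t : α × α × α =>
        (pa t.1 ∧ pb t.2.1 ∧ pc t.2.2) ∧ t.1 ≠ t.2.1 ∧ t.1 ≠ t.2.2 ∧ t.2.1 ≠ t.2.2).card : ℝ)
    = ((univ.filter pa).card : ℝ) * ((univ.filter pb).card : ℝ) * ((univ.filter pc).card : ℝ)
      - ((univ.filter fun x => pa x ∧ pb x).card : ℝ) * ((univ.filter pc).card : ℝ)
      - ((univ.filter fun x => pa x ∧ pc x).card : ℝ) * ((univ.filter pb).card : ℝ)
      - ((univ.filter pa).card : ℝ) * ((univ.filter fun x => pb x ∧ pc x).card : ℝ)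
      + 2 * ((univ.filter fun x => pa x ∧ pb x ∧ pc x).card : ℝ) := by
  set A : α → ℝ := fun x => if pa x then 1 else 0 with hA
  set B : α → ℝ := fun x => if pb x then 1 else 0 with hB
  set C : α → ℝ := fun x => if pc x then 1 else 0 with hC
  set a : ℝ := ∑ x, A x with ha
  set b : ℝ := ∑ x, B x with hb
  set c : ℝ := ∑ x, C x with hc
  set ab : ℝ := ∑ x, A x * B x with hab
  set ac : ℝ := ∑ x, A x * C x with hac
  set bc : ℝ := ∑ x, B x * C x with hbc
  set abc : ℝ := ∑ x, A x * B x * C x with habc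
  have e_a : ((univ.filter pa).card : ℝ) = a := by simp [ha, hA, Finset.sum_boole]
  have e_b : ((univ.filter pb).card : ℝ) = b := by simp [hb, hB, Finset.sum_boole]
  have e_c : ((univ.filter pc).card : ℝ) = c := by simp [hc, hC, Finset.sum_boole]
  have e_ab : ((univ.filter fun x => pa x ∧ pb x).card : ℝ) = ab := by
    rw [← Finset.sum_boole, hab]
    refine Finset.sum_congr rfl fun x _ => ?_
    by_cases h1 : pa x <;> by_cases h2 : pb x <;> simp [hA, hB, h1, h2]
  have e_ac : ((univ.filter fun x => pa x ∧ pc x).card : ℝ) = ac := by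
    rw [← Finset.sum_boole, hac]
    refine Finset.sum_congr rfl fun x _ => ?_
    by_cases h1 : pa x <;> by_cases h2 : pc x <;> simp [hA, hC, h1, h2]
  have e_bc : ((univ.filter fun x => pb x ∧ pc x).card : ℝ) = bc := by
    rw [← Finset.sum_boole, hbc]
    refine Finset.sum_congr rfl fun x _ => ?_
    by_cases h1 : pb x <;> by_cases h2 : pc x <;> simp [hB, hC, h1, h2]
  have e_abc : ((univ.filter fun x => pa x ∧ pb x ∧ pc x).card : ℝ) = abc := by
    rw [← Finset.sum_boole, habc]
    refine Finset.sum_congr rfl fun x _ => ?_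
    by_cases h1 : pa x <;> by_cases h2 : pb x <;> by_cases h3 : pc x <;>
      simp [hA, hB, hC, h1, h2, h3]
  rw [e_a, e_b, e_c, e_ab, e_ac, e_bc, e_abc, ← Finset.sum_boole]
  rw [Fintype.sum_prod_type]
  have key : ∀ x : α, ∀ t : α × α,
      (if ((pa x ∧ pb t.1 ∧ pc t.2) ∧ x ≠ t.1 ∧ x ≠ t.2 ∧ t.1 ≠ t.2) then (1:ℝ) else 0)
      = (A x * B t.1 * (if x = t.1 then 0 else 1)) *
          (C t.2 * (if x = t.2 then 0 else 1) * (if t.1 = t.2 then 0 else 1)) := by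
    intro x t
    by_cases h1 : pa x <;> by_cases h2 : pb t.1 <;> by_cases h3 : pc t.2 <;>
      by_cases h4 : x = t.1 <;> by_cases h5 : x = t.2 <;> by_cases h6 : t.1 = t.2 <;>
      simp [hA, hB, hC, h1, h2, h3, h4, h5, h6]
  have hz : ∀ x y : α, ∑ z, C z * (if x = z then 0 else 1) * (if y = z then 0 else 1)
      = c - C x - C y + (if x = y then C x else 0) := by
    intro x y
    have pw : ∀ z : α, C z * (if x = z then 0 else 1) * (if y = z then 0 else 1)
        = C z - (if x = z then C z else 0) - (if y = z then C z else 0)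
          + (if x = z ∧ y = z then C z else 0) := by
      intro z
      by_cases h1 : x = z <;> by_cases h2 : y = z <;> simp [h1, h2] <;> ring
    rw [Finset.sum_congr rfl fun z _ => pw z]
    rw [Finset.sum_add_distrib, Finset.sum_sub_distrib, Finset.sum_sub_distrib]
    have h1 : ∑ z, (if x = z then C z else 0) = C x := by
      rw [Finset.sum_ite_eq]; simp
    have h2 : ∑ z, (if y = z then C z else 0) = C y := by
      rw [Finset.sum_ite_eq]; simp
    have h3 : ∑ z, (if x = z ∧ y = z then C z else 0) = (if x = y then C x else 0) := by
      by_cases hxy : x = y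
      · subst hxy
        simp only [and_self, if_pos]
        rw [Finset.sum_ite_eq]; simp
      · rw [if_neg hxy]
        refine Finset.sum_eq_zero fun z _ => ?_
        rw [if_neg]
        rintro ⟨rfl, rfl⟩
        exact hxy rfl
    rw [h1, h2, h3, ← hc]
  have hy : ∀ x : α, ∑ y, B y * (if x = y then 0 else 1) *
      (c - C x - C y + (if x = y then C x else 0))
      = b * (c - C x) - bc - B x * (c - 2 * C x) := by
    intro x
    have pw : ∀ y : α, B y * (if x = y then 0 else 1) *
        (c - C x - C y + (if x = y then C x else 0))
        = B y * (c - C x) - B y * C y - (if x = y then B y * (c - 2 * C y) else 0) := by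
      intro y
      by_cases h1 : x = y <;> simp [h1] <;> ring
    rw [Finset.sum_congr rfl fun y _ => pw y]
    rw [Finset.sum_sub_distrib, Finset.sum_sub_distrib]
    have h1 : ∑ y, (if x = y then B y * (c - 2 * C y) else 0) = B x * (c - 2 * C x) := by
      rw [Finset.sum_ite_eq]; simp
    rw [h1, ← Finset.sum_mul, ← hb, ← hbc]
  calc ∑ x : α, ∑ t : α × α,
        (if ((pa x ∧ pb t.1 ∧ pc t.2) ∧ x ≠ t.1 ∧ x ≠ t.2 ∧ t.1 ≠ t.2) then (1:ℝ) else 0)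
      = ∑ x : α, ∑ y : α, ∑ z : α, (A x * B y * (if x = y then 0 else 1)) *
          (C z * (if x = z then 0 else 1) * (if y = z then 0 else 1)) := by
        refine Finset.sum_congr rfl fun x _ => ?_
        rw [Fintype.sum_prod_type]
        exact Finset.sum_congr rfl fun y _ => Finset.sum_congr rfl fun z _ => key x (y, z)
    _ = ∑ x : α, ∑ y : α, (A x * B y * (if x = y then 0 else 1)) *
          (c - C x - C y + (if x = y then C x else 0)) := by
        refine Finset.sum_congr rfl fun x _ => Finset.sum_congr rfl fun y _ => ?_
        rw [← Finset.mul_sum, hz x y]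
    _ = ∑ x : α, A x * (b * (c - C x) - bc - B x * (c - 2 * C x)) := by
        refine Finset.sum_congr rfl fun x _ => ?_
        rw [← hy x, Finset.mul_sum]
        exact Finset.sum_congr rfl fun y _ => by ring
    _ = a * b * c - ab * c - ac * b - a * bc + 2 * abc := by
        have pw : ∀ x : α, A x * (b * (c - C x) - bc - B x * (c - 2 * C x))
            = (A x) * b * c - (A x * B x) * c - (A x * C x) * b - (A x) * bc
              + 2 * (A x * B x * C x) := by intro x; ring
        rw [Finset.sum_congr rfl fun x _ => pw x]
        simp only [Finset.sum_add_distrib, Finset.sum_sub_distrib, ← Finset.sum_mul,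
          ← Finset.mul_sum, ← ha, ← hab, ← hac, ← habc]
        try ring

lemma card_fin_Ico (I u v : ℕ) (huv : u ≤ v) (hv : v ≤ I) (p : Fin I → Prop)
    [DecidablePred p] (h : ∀ j : Fin I, p j ↔ (u ≤ (j : ℕ) ∧ (j : ℕ) < v)) :
    ((univ.filter p).card : ℝ) = (v : ℝ) - (u : ℝ) := by
  have : (univ.filter p).card = (Finset.Ico u v).card := by
    refine Finset.card_bij (fun x _ => (x : ℕ)) ?_ ?_ ?_
    · intro x hx
      simp only [mem_filter, mem_univ, true_and] at hx
      simpa [Finset.mem_Ico] using (h x).1 hx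
    · intro x _ y _ hxy; exact Fin.val_injective hxy
    · intro j hj
      simp only [Finset.mem_Ico] at hj
      have hjI : j < I := lt_of_lt_of_le hj.2 hv
      refine ⟨⟨j, hjI⟩, ?_, rfl⟩
      simp only [mem_filter, mem_univ, true_and]
      exact (h ⟨j, hjI⟩).2 ⟨hj.1, hj.2⟩
  rw [this, Nat.card_Ico, Nat.cast_sub huv]

lemma swProb_triple (I : ℕ) (hI3 : 3 ≤ I) (i i' k : Fin I)
    (hii' : i ≠ i') (hik : i ≠ k) (hi'k : i' ≠ k)
    (pa pb pc : Fin I → Prop)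
    [DecidablePred pa] [DecidablePred pb] [DecidablePred pc]
    {A B C AB AC BC ABC : ℝ}
    (eA : ((univ.filter pa).card : ℝ) = A)
    (eB : ((univ.filter pb).card : ℝ) = B)
    (eC : ((univ.filter pc).card : ℝ) = C)
    (eAB : ((univ.filter fun x => pa x ∧ pb x).card : ℝ) = AB)
    (eAC : ((univ.filter fun x => pa x ∧ pc x).card : ℝ) = AC)
    (eBC : ((univ.filter fun x => pb x ∧ pc x).card : ℝ) = BC)
    (eABC : ((univ.filter fun x => pa x ∧ pb x ∧ pc x).card : ℝ) = ABC) :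
    swProb I (fun σ => pa (σ i) ∧ pb (σ i') ∧ pc (σ k))
      = (A * B * C - AB * C - AC * B - A * BC + 2 * ABC)
        / ((I : ℝ) * ((I : ℝ) - 1) * ((I : ℝ) - 2)) := by
  subst eA eB eC eAB eAC eBC eABC
  have hnum := perm_group_count i i' k hii' hik hi'k
    (fun t : Fin I × Fin I × Fin I => pa t.1 ∧ pb t.2.1 ∧ pc t.2.2)
  have hden := perm_group_count i i' k hii' hik hi'k
    (fun t : Fin I × Fin I × Fin I =>
      (fun _ : Fin I => True) t.1 ∧ (fun _ : Fin I => True) t.2.1 ∧ (fun _ : Fin I => True) t.2.2)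
  simp only [] at hnum hden
  set d := (univ.filter fun σ : Equiv.Perm (Fin I) => σ i = i ∧ σ i' = i' ∧ σ k = k).card with hd
  have hdpos : 0 < d := Finset.card_pos.2 ⟨1, by simp⟩
  have h3 := count_triples (α := Fin I) (fun _ => True) (fun _ => True) (fun _ => True)
  simp only [true_and, Finset.filter_true, Finset.card_univ, Fintype.card_perm,
    Fintype.card_fin] at hden h3
  have hfact : (I.factorial : ℝ)
      = ((I : ℝ) * ((I : ℝ) - 1) * ((I : ℝ) - 2)) * (d : ℝ) := by
    have hc : (I.factorial : ℝ)
        = ((univ.filter fun t : Fin I × Fin I × Fin I =>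
            t.1 ≠ t.2.1 ∧ t.1 ≠ t.2.2 ∧ t.2.1 ≠ t.2.2).card : ℝ) * (d : ℝ) := by
      exact_mod_cast hden
    rw [hc, h3]; ring
  have hdne : (d : ℝ) ≠ 0 := by positivity
  have h5 := count_triples (α := Fin I) pa pb pc
  unfold swProb
  convert_to ((#(univ.filter fun t : Fin I × Fin I × Fin I =>
      (pa t.1 ∧ pb t.2.1 ∧ pc t.2.2) ∧ t.1 ≠ t.2.1 ∧ t.1 ≠ t.2.2 ∧ t.2.1 ≠ t.2.2) * d : ℕ) : ℝ)
      / (I.factorial : ℝ) = _ using 2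
  · rw [Nat.cast_inj]; convert hnum
  rw [Nat.cast_mul, hfact]
  rw [mul_div_mul_right _ _ hdne]
  convert congrArg (fun x : ℝ => x / ((I:ℝ) * ((I:ℝ) - 1) * ((I:ℝ) - 2))) h5 using 2


lemma swZ_one (I : ℕ) (T : ℕ → ℕ) (σ : Equiv.Perm (Fin I)) (x : Fin I) (j : ℕ) :
    swZ I T σ x j = 1 ↔ (σ x : ℕ) < T j := by
  unfold swZ; split_ifs with h <;> simp <;> omega

lemma swZ_zero (I : ℕ) (T : ℕ → ℕ) (σ : Equiv.Perm (Fin I)) (x : Fin I) (j : ℕ) :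
    swZ I T σ x j = 0 ↔ T j ≤ (σ x : ℕ) := by
  unfold swZ; split_ifs with h <;> simp <;> omega

lemma swProb_congr (I : ℕ) {p q : Equiv.Perm (Fin I) → Prop} (h : ∀ σ, p σ ↔ q σ) :
    swProb I p = swProb I q := by
  have : p = q := funext fun σ => propext (h σ)
  rw [this]

end Aux

theorem statement7
    (I J : ℕ) (hI : 2 ≤ I) (hJ : 1 ≤ J)
    (T : ℕ → ℕ)
    (hmono : ∀ j j', 1 ≤ j → j ≤ j' → j' ≤ J → T j ≤ T j')
    (hlb : ∀ j, 1 ≤ j → j ≤ J → 1 ≤ T j)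
    (hub : ∀ j, 1 ≤ j → j ≤ J → T j ≤ I - 1)
    (hI3 : 3 ≤ I)
    (i i' k : Fin I) (hii' : i ≠ i') (hik : i ≠ k) (hi'k : i' ≠ k)
    (a b c : ℕ) (ha1 : 1 ≤ a) (hab : a ≤ b) (hbc : b ≤ c) (hcJ : c ≤ J) :
    swProb I (fun σ => swZ I T σ i a = 1 ∧ swZ I T σ i' b = 1 ∧ swZ I T σ k c = 0)
      = ((T a : ℝ) / I) * (((T b : ℝ) - 1) / ((I : ℝ) - 1)) *
          (((I : ℝ) - (T c : ℝ)) / ((I : ℝ) - 2)) ∧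
    swProb I (fun σ => swZ I T σ i a = 1 ∧ swZ I T σ i' b = 0 ∧ swZ I T σ k c = 1)
      = ((T a : ℝ) / I) *
          ((((T b : ℝ) - 1) / ((I : ℝ) - 1)) * (((I : ℝ) - (T b : ℝ)) / ((I : ℝ) - 2))
            + (((T c : ℝ) - (T b : ℝ)) / ((I : ℝ) - 1)) *
                (((I : ℝ) - (T b : ℝ) - 1) / ((I : ℝ) - 2))) ∧
    swProb I (fun σ => swZ I T σ i a = 0 ∧ swZ I T σ i' b = 1 ∧ swZ I T σ k c = 1)
      = (((T b : ℝ) - (T a : ℝ)) / I) * (((T b : ℝ) - 1) / ((I : ℝ) - 1)) *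
          (((T c : ℝ) - 2) / ((I : ℝ) - 2))
        + (((T c : ℝ) - (T b : ℝ)) / I) * ((T b : ℝ) / ((I : ℝ) - 1)) *
          (((T c : ℝ) - 2) / ((I : ℝ) - 2))
        + (((I : ℝ) - (T c : ℝ)) / I) * ((T b : ℝ) / ((I : ℝ) - 1)) *
          (((T c : ℝ) - 1) / ((I : ℝ) - 2)) := by
  have h1b : 1 ≤ b := ha1.trans hab
  have h1c : 1 ≤ c := h1b.trans hbc
  have haJ : a ≤ J := hab.trans (hbc.trans hcJ)
  have hbJ : b ≤ J := hbc.trans hcJ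
  have hTa1 : 1 ≤ T a := hlb a ha1 haJ
  have hTb1 : 1 ≤ T b := hlb b h1b hbJ
  have hTab : T a ≤ T b := hmono a b ha1 hab hbJ
  have hTbc : T b ≤ T c := hmono b c h1b hbc hcJ
  have hTac : T a ≤ T c := hTab.trans hTbc
  have hTaI : T a ≤ I := le_trans (hub a ha1 haJ) (Nat.sub_le I 1)
  have hTbI : T b ≤ I := le_trans (hub b h1b hbJ) (Nat.sub_le I 1)
  have hTcI : T c ≤ I := le_trans (hub c h1c hcJ) (Nat.sub_le I 1)
  have hIR : (3 : ℝ) ≤ (I : ℝ) := by exact_mod_cast hI3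
  have hI0 : (I : ℝ) ≠ 0 := by intro h; linarith
  have hI1 : (I : ℝ) - 1 ≠ 0 := by intro h; linarith
  have hI2 : (I : ℝ) - 2 ≠ 0 := by intro h; linarith
  refine ⟨?_, ?_, ?_⟩
  · have key : swProb I (fun σ => swZ I T σ i a = 1 ∧ swZ I T σ i' b = 1 ∧ swZ I T σ k c = 0)
        = swProb I (fun σ => (fun x : Fin I => (x : ℕ) < T a) (σ i)
            ∧ (fun x : Fin I => (x : ℕ) < T b) (σ i')
            ∧ (fun x : Fin I => T c ≤ (x : ℕ)) (σ k)) := by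
      apply swProb_congr
      intro σ
      simp only [swZ_one, swZ_zero]
    rw [key, swProb_triple I hI3 i i' k hii' hik hi'k _ _ _
      (card_fin_Ico I 0 (T a) (Nat.zero_le _) hTaI _ (fun j => by omega))
      (card_fin_Ico I 0 (T b) (Nat.zero_le _) hTbI _ (fun j => by omega))
      (card_fin_Ico I (T c) I hTcI le_rfl _ (fun j => by omega))
      (card_fin_Ico I 0 (T a) (Nat.zero_le _) hTaI
        (fun x => (x : ℕ) < T a ∧ (x : ℕ) < T b) (fun j => by omega))
      (card_fin_Ico I (T c) (T c) le_rfl hTcI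
        (fun x => (x : ℕ) < T a ∧ T c ≤ (x : ℕ)) (fun j => by omega))
      (card_fin_Ico I (T c) (T c) le_rfl hTcI
        (fun x => (x : ℕ) < T b ∧ T c ≤ (x : ℕ)) (fun j => by omega))
      (card_fin_Ico I (T c) (T c) le_rfl hTcI
        (fun x => (x : ℕ) < T a ∧ (x : ℕ) < T b ∧ T c ≤ (x : ℕ))
        (fun j => by omega))]
    push_cast
    field_simp
    ring
  · have key : swProb I (fun σ => swZ I T σ i a = 1 ∧ swZ I T σ i' b = 0 ∧ swZ I T σ k c = 1)
        = swProb I (fun σ => (fun x : Fin I => (x : ℕ) < T a) (σ i)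
            ∧ (fun x : Fin I => T b ≤ (x : ℕ)) (σ i')
            ∧ (fun x : Fin I => (x : ℕ) < T c) (σ k)) := by
      apply swProb_congr
      intro σ
      simp only [swZ_one, swZ_zero]
    rw [key, swProb_triple I hI3 i i' k hii' hik hi'k _ _ _
      (card_fin_Ico I 0 (T a) (Nat.zero_le _) hTaI _ (fun j => by omega))
      (card_fin_Ico I (T b) I hTbI le_rfl _ (fun j => by omega))
      (card_fin_Ico I 0 (T c) (Nat.zero_le _) hTcI _ (fun j => by omega))
      (card_fin_Ico I (T b) (T b) le_rfl hTbI
        (fun x => (x : ℕ) < T a ∧ T b ≤ (x : ℕ)) (fun j => by omega))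
      (card_fin_Ico I 0 (T a) (Nat.zero_le _) hTaI
        (fun x => (x : ℕ) < T a ∧ (x : ℕ) < T c) (fun j => by omega))
      (card_fin_Ico I (T b) (T c) hTbc hTcI
        (fun x => T b ≤ (x : ℕ) ∧ (x : ℕ) < T c) (fun j => by omega))
      (card_fin_Ico I (T b) (T b) le_rfl hTbI
        (fun x => (x : ℕ) < T a ∧ T b ≤ (x : ℕ) ∧ (x : ℕ) < T c)
        (fun j => by omega))]
    push_cast
    field_simp
    ring
  · have key : swProb I (fun σ => swZ I T σ i a = 0 ∧ swZ I T σ i' b = 1 ∧ swZ I T σ k c = 1)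
        = swProb I (fun σ => (fun x : Fin I => T a ≤ (x : ℕ)) (σ i)
            ∧ (fun x : Fin I => (x : ℕ) < T b) (σ i')
            ∧ (fun x : Fin I => (x : ℕ) < T c) (σ k)) := by
      apply swProb_congr
      intro σ
      simp only [swZ_one, swZ_zero]
    rw [key, swProb_triple I hI3 i i' k hii' hik hi'k _ _ _
      (card_fin_Ico I (T a) I hTaI le_rfl _ (fun j => by omega))
      (card_fin_Ico I 0 (T b) (Nat.zero_le _) hTbI _ (fun j => by omega))
      (card_fin_Ico I 0 (T c) (Nat.zero_le _) hTcI _ (fun j => by omega))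
      (card_fin_Ico I (T a) (T b) hTab hTbI
        (fun x => T a ≤ (x : ℕ) ∧ (x : ℕ) < T b) (fun j => by omega))
      (card_fin_Ico I (T a) (T c) hTac hTcI
        (fun x => T a ≤ (x : ℕ) ∧ (x : ℕ) < T c) (fun j => by omega))
      (card_fin_Ico I 0 (T b) (Nat.zero_le _) hTbI
        (fun x => (x : ℕ) < T b ∧ (x : ℕ) < T c) (fun j => by omega))
      (card_fin_Ico I (T a) (T b) hTab hTbI
        (fun x => T a ≤ (x : ℕ) ∧ (x : ℕ) < T b ∧ (x : ℕ) < T c)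
        (fun j => by omega))]
    push_cast
    field_simp
    ring
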